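/- Let X be a compact Hausdorff non-scattered space with perfect kernel K = ker(X), and A a closed subalgebra of C(X) separating points and containing constants. Then A↾K is closed in C(K), and every clopen subset of K whose characteristic function lies in A↾K is of the form H ∩ K for some clopen H ⊆ X with χ_H ∈ A. -/

import Mathlib

open Classical Set

/-- `χ_H ∈ A`. -/
noncomputable def chiMem {X : Type*} [TopologicalSpace X]
    (A : Subalgebra ℂ C(X, ℂ)) (H : Set X) : Prop :=
  ∃ g ∈ A, ∀ x, g x = if x ∈ H then (1 : ℂ) else 0

/-- The restriction algebra `A↾K`. -/
def restrictSet {X : Type*} [TopologicalSpace X] (A : Subalgebra ℂ C(X, ℂ)) (K : Set X) :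
    Set C(K, ℂ) :=
  {g | ∃ f ∈ A, f.restrict K = g}

/-!
Closed sets disjoint from the perfect kernel contain no nonempty perfect set, and a continuous
image of such a compact set in `ℂ` is countable (a minimal closed set covering a perfect set of
values would itself be perfect). Hence `f(X) \ f(K)` is countable for every `f`, and for all but
countably many radii `r` the circle `|w - c| = r` misses `f(X)` while only countably many values
of `f` lie outside it. Such a circle is joined to `∞` by a ray missing `f(X)`, so it also misses
the spectrum of `f` in the closed algebra `A`, and the Cauchy integral
`(2πi)⁻¹ ∮ p(z) (z - f)⁻¹ dz` lies in `A` and equals `p ∘ f` on `{|f - c| < r}` and `0` elsewhere.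
With `p = id`, `c = 0`, an element small on `K` is replaced by one with the same restriction that
is small on `X`, which makes the restriction map have closed range. With `p = 1`, `c = 1` and
`f↾K = χ_J` it produces the idempotent `χ_H` of `H = {|f - 1| < r}`, and `H ∩ K = J`.
-/

open Metric Topology

section ScatteredImage

variable {X Y : Type*} [TopologicalSpace X] [TopologicalSpace Y]

theorem IsChain.mem_image_sInter [CompactSpace X] [T1Space Y] {g : X → Y} (hg : Continuous g)
    {c : Set (Set X)} (hc : IsChain (· ⊆ ·) c) (hcne : c.Nonempty)
    (hcl : ∀ s ∈ c, IsClosed s) {y : Y} (hy : ∀ s ∈ c, y ∈ g '' s) : y ∈ g '' ⋂₀ c := by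
  have : Nonempty c := hcne.to_subtype
  have hdir : Directed (· ⊇ ·) fun s : c => (s : Set X) ∩ g ⁻¹' {y} := by
    rintro ⟨s, hs⟩ ⟨t, ht⟩
    rcases hc.total hs ht with h | h
    · exact ⟨⟨s, hs⟩, subset_rfl, inter_subset_inter_left _ h⟩
    · exact ⟨⟨t, ht⟩, inter_subset_inter_left _ h, subset_rfl⟩
  have hclosed (s : c) : IsClosed ((s : Set X) ∩ g ⁻¹' {y}) :=
    (hcl s s.2).inter (isClosed_singleton.preimage hg)
  obtain ⟨x, hx⟩ := IsCompact.nonempty_iInter_of_directed_nonempty_isCompact_isClosed _ hdir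
    (fun s => by obtain ⟨x, hx, rfl⟩ := hy s s.2; exact ⟨x, hx, rfl⟩)
    (fun s => (hclosed s).isCompact) hclosed
  simp only [mem_iInter, mem_inter_iff, mem_preimage, mem_singleton_iff] at hx
  exact ⟨x, mem_sInter.2 fun s hs => (hx ⟨s, hs⟩).1, (hx (Classical.arbitrary c)).2⟩

theorem IsClosed.exists_minimal_image_superset [CompactSpace X] [T1Space Y] {Z : Set X}
    (hZ : IsClosed Z) {g : X → Y} (hg : Continuous g) {D : Set Y} (hD : D ⊆ g '' Z) :
    ∃ m ⊆ Z, Minimal (fun m => IsClosed m ∧ D ⊆ g '' m) m :=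
  zorn_superset_nonempty {m | IsClosed m ∧ D ⊆ g '' m}
    (fun c hcS hc hcne => ⟨⋂₀ c, ⟨isClosed_sInter fun _ hs => (hcS hs).1,
      fun _ hy => hc.mem_image_sInter hg hcne (fun _ hs => (hcS hs).1)
        fun _ hs => (hcS hs).2 hy⟩, fun _ => sInter_subset_of_mem⟩) Z ⟨hZ, hD⟩

/-- Removing an isolated point `x` from a minimal `m` loses exactly the value `g x` of `D`,
which would make it an isolated point of `D`. -/
theorem Minimal.perfect_of_perfect_image_superset [CompactSpace X] [T2Space Y] {g : X → Y}
    (hg : Continuous g) {D : Set Y} (hD : Perfect D) {m : Set X}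
    (hm : Minimal (fun m => IsClosed m ∧ D ⊆ g '' m) m) : Perfect m := by
  refine ⟨hm.prop.1, preperfect_iff_nhds.2 fun x hxm U hU => ?_⟩
  by_contra! hiso
  obtain ⟨V, hVU, hVo, hxV⟩ := mem_nhds_iff.1 hU
  have hmV_closed : IsClosed (m \ V) := hm.prop.1.sdiff hVo
  have hnot : ¬ D ⊆ g '' (m \ V) := fun h =>
    (hm.eq_of_subset ⟨hmV_closed, h⟩ sdiff_subset ▸ hxm).2 hxV
  obtain ⟨d, hdD, hd⟩ := not_subset.1 hnot
  have hval (e : Y) (he : e ∈ D) (hne : e ∉ g '' (m \ V)) : e = g x := by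
    obtain ⟨z, hzm, rfl⟩ := hm.prop.2 he
    by_cases hzV : z ∈ V
    · rw [hiso z ⟨hVU hzV, hzm⟩]
    · exact absurd ⟨z, ⟨hzm, hzV⟩, rfl⟩ hne
  have hclosed : IsClosed (g '' (m \ V)) := (hmV_closed.isCompact.image hg).isClosed
  obtain ⟨e, ⟨heC, heD⟩, hed⟩ :=
    preperfect_iff_nhds.1 hD.acc d hdD _ (hclosed.isOpen_compl.mem_nhds hd)
  exact hed ((hval e heD heC).trans (hval d hdD hd).symm)

theorem countable_image_of_forall_perfect_subset_eq_empty [CompactSpace X] [T2Space Y]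
    [SecondCountableTopology Y] {Z : Set X} (hZ : IsClosed Z) {g : X → Y} (hg : Continuous g)
    (hZP : ∀ P ⊆ Z, Perfect P → P = ∅) : (g '' Z).Countable := by
  obtain ⟨V, D, hV, hD, hVD⟩ :=
    exists_countable_union_perfect_of_isClosed (hZ.isCompact.image hg).isClosed
  obtain rfl | ⟨d, hd⟩ := D.eq_empty_or_nonempty
  · simpa [hVD] using hV
  obtain ⟨m, hmZ, hm⟩ := hZ.exists_minimal_image_superset hg (hVD ▸ subset_union_right)
  obtain ⟨x, hx, -⟩ := hm.prop.2 hd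
  have hm_empty := hZP m hmZ (hm.perfect_of_perfect_image_superset hg hD)
  exact (eq_empty_iff_forall_notMem.1 hm_empty x hx).elim

end ScatteredImage

theorem countable_range_diff_image_of_forall_perfect_subset {X Y : Type*} [TopologicalSpace X]
    [CompactSpace X] [MetricSpace Y] [SecondCountableTopology Y] (K : Set X) [CompactSpace K]
    (hKmax : ∀ P : Set X, Perfect P → P ⊆ K) (f : C(X, Y)) : (range f \ f '' K).Countable := by
  have hfK : IsClosed (f '' K) :=
    (isCompact_iff_compactSpace.2 ‹_›).image f.continuous |>.isClosed
  obtain ⟨F, hFcl, hFsub, hFU, -⟩ := hfK.isOpen_compl.exists_iUnion_isClosed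
  have hsplit : range f \ f '' K = ⋃ n, f '' (f ⁻¹' F n) := by
    rw [← image_iUnion, ← preimage_iUnion, hFU, image_preimage_eq_range_inter, sdiff_eq]
  rw [hsplit]
  refine countable_iUnion fun n => countable_image_of_forall_perfect_subset_eq_empty
    ((hFcl n).preimage f.continuous) f.continuous fun P hPF hP => ?_
  exact eq_empty_of_forall_notMem fun x hx => hFsub n (hPF hx) ⟨x, hKmax P hP hx, rfl⟩

section ComplexPlane

open Complex Real

theorem circleIntegral_sub_inv_smul_eq_ite {p : ℂ → ℂ} (hp : Differentiable ℂ p) {c w : ℂ}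
    {r : ℝ} (hr : 0 < r) (hw : dist w c ≠ r) :
    (2 * π * I : ℂ)⁻¹ • ∮ z in C(c, r), (z - w)⁻¹ • p z = if dist w c < r then p w else 0 := by
  split_ifs with hlt
  · exact hp.diffContOnCl.two_pi_i_inv_smul_circleIntegral_sub_inv_smul (mem_ball.2 hlt)
  · have hgt : r < dist w c := lt_of_le_of_ne (not_lt.1 hlt) hw.symm
    have hdiff : DifferentiableOn ℂ (fun z => (z - w)⁻¹ • p z) (closedBall c r) := by
      intro z hz
      have hzw : z - w ≠ 0 := sub_ne_zero.2 fun h => hgt.not_ge (mem_closedBall.1 (h ▸ hz))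
      exact (((differentiableAt_id.sub_const w).inv hzw).smul (hp z)).differentiableWithinAt
    rw [(hdiff.diffContOnCl_ball subset_rfl).circleIntegral_eq_zero hr.le, smul_zero]

/-- The sphere together with a radial ray whose direction avoids the countably many arguments
of points of `S` outside the open disc. -/
theorem exists_isPreconnected_unbounded_superset_sphere {S : Set ℂ} {c : ℂ} {r : ℝ} (hr : 0 < r)
    (hS : {w ∈ S | r ≤ dist w c}.Countable) (hSsph : Disjoint (sphere c r) S) :
    ∃ Γ : Set ℂ, sphere c r ⊆ Γ ∧ IsPreconnected Γ ∧ ¬ Bornology.IsBounded Γ ∧ Disjoint Γ S := by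
  obtain ⟨θ, hθ, hθπ⟩ := ((hS.image fun w => arg (w - c)).dense_compl ℝ).exists_between
    (neg_lt_self pi_pos)
  set ray : ℝ → ℂ := fun s => c + s * exp (θ * I)
  have hdist (s : ℝ) (hs : 0 ≤ s) : dist (ray s) c = s := by
    simp [ray, norm_exp_ofReal_mul_I, abs_of_nonneg hs]
  refine ⟨sphere c r ∪ ray '' Ici r, subset_union_left, ?_, ?_, ?_⟩
  · have hsph : IsPreconnected (sphere c r) := by
      simpa [abs_of_pos hr] using (isPreconnected_range (continuous_circleMap c r))
    exact hsph.union (ray r) (mem_sphere.2 (hdist r hr.le)) (mem_image_of_mem _ self_mem_Ici)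
      (isPreconnected_Ici.image _ (by fun_prop : Continuous ray).continuousOn)
  · rw [isBounded_iff_subset_closedBall c]
    rintro ⟨R, hR⟩
    have hs : r ≤ max r (R + 1) := le_max_left _ _
    have := hR (Or.inr (mem_image_of_mem ray hs))
    rw [mem_closedBall, hdist _ (hr.le.trans hs)] at this
    linarith [le_max_right r (R + 1)]
  · refine disjoint_union_left.2 ⟨hSsph, disjoint_left.2 ?_⟩
    rintro _ ⟨s, hs, rfl⟩ hsS
    have hs0 : 0 < s := hr.trans_le hs
    refine hθ ⟨ray s, ⟨hsS, (hdist s hs0.le).symm ▸ hs⟩, ?_⟩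
    change arg (ray s - c) = θ
    rw [show ray s - c = (s : ℂ) * exp (θ * I) by simp [ray], arg_real_mul _ hs0, arg_exp_mul_I,
      toIocMod_eq_self]
    exact ⟨hθπ.1, by linarith [hθπ.2]⟩

end ComplexPlane

theorem intervalIntegral_mem_of_isClosed {E : Type*} [NormedAddCommGroup E] [NormedSpace ℝ E]
    [CompleteSpace E] {M : Submodule ℝ E} (hM : IsClosed (M : Set E)) {F : ℝ → E}
    (hF : Continuous F) (hFM : ∀ t, F t ∈ M) (a b : ℝ) : ∫ t in a..b, F t ∈ M := by
  have := hM.completeSpace_coe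
  let F' : ℝ → M := fun t => ⟨F t, hFM t⟩
  have hF' : Continuous F' := hF.subtype_mk hFM
  rw [show (∫ t in a..b, F t) = M.subtypeL (∫ t in a..b, F' t) from
    M.subtypeL.intervalIntegral_comp_comm (hF'.intervalIntegrable a b)]
  exact (∫ t in a..b, F' t).2

theorem Subalgebra.notMem_spectrum_of_isPreconnected {𝕜 A : Type*} [NormedField 𝕜]
    [NormedRing A] [NormedAlgebra 𝕜 A] [CompleteSpace A] (S : Subalgebra 𝕜 A)
    (hS : IsClosed (S : Set A)) (x : S) {Γ : Set 𝕜} (hΓ : IsPreconnected Γ)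
    (hΓunb : ¬ Bornology.IsBounded Γ) (hΓx : Disjoint Γ (spectrum 𝕜 (x : A))) {w : 𝕜}
    (hw : w ∈ Γ) : w ∉ spectrum 𝕜 x := fun hwx =>
  have := hS
  hΓunb <| (Subalgebra.spectrum_isBounded_connectedComponentIn S x hwx).subset <|
    hΓ.subset_connectedComponentIn hw hΓx.subset_compl_right

section ContinuousFunctions

variable {X : Type*} [TopologicalSpace X] [CompactSpace X] {A : Subalgebra ℂ C(X, ℂ)}

theorem Subalgebra.exists_mem_apply_eq_inv_sub (hAcl : IsClosed (A : Set C(X, ℂ)))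
    {f : C(X, ℂ)} (hf : f ∈ A) {c : ℂ} {r : ℝ} (hr : 0 < r) (hsph : ∀ x, dist (f x) c ≠ r)
    (hcnt : {w ∈ range f | r ≤ dist w c}.Countable) {w : ℂ} (hw : w ∈ sphere c r) :
    ∃ g ∈ A, ∀ x, g x = (w - f x)⁻¹ := by
  obtain ⟨Γ, hsphΓ, hΓ, hΓunb, hΓf⟩ := exists_isPreconnected_unbounded_superset_sphere hr hcnt
    (disjoint_right.2 fun _ ⟨x, hx⟩ hsx => hsph x (hx ▸ mem_sphere.1 hsx))
  have hwf := A.notMem_spectrum_of_isPreconnected hAcl ⟨f, hf⟩ hΓ hΓunb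
    (by rwa [ContinuousMap.spectrum_eq_range]) (hsphΓ hw)
  obtain ⟨u, hu⟩ := spectrum.notMem_iff.1 hwf
  refine ⟨((u⁻¹ : Aˣ) : A), SetLike.coe_mem _, fun x => eq_inv_of_mul_eq_one_left ?_⟩
  have hinv : ((u⁻¹ : Aˣ) : A) * (algebraMap ℂ A w - ⟨f, hf⟩) = 1 := hu ▸ u.inv_mul
  simpa using congr_arg (fun g : A => (g : C(X, ℂ)) x) hinv

/-- The witness is the Cauchy integral `(2πi)⁻¹ ∮ p(z) (z - f)⁻¹ dz`, taken in `C(X, ℂ)`. -/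
theorem Subalgebra.exists_mem_apply_eq_ite (hAcl : IsClosed (A : Set C(X, ℂ)))
    {f : C(X, ℂ)} {c : ℂ} {r : ℝ} (hr : 0 < r) (hsph : ∀ x, dist (f x) c ≠ r)
    (hres : ∀ w ∈ sphere c r, ∃ g ∈ A, ∀ x, g x = (w - f x)⁻¹) {p : ℂ → ℂ}
    (hp : Differentiable ℂ p) :
    ∃ h ∈ A, ∀ x, h x = if dist (f x) c < r then p (f x) else 0 := by
  set γ := circleMap c r
  have hγ (θ : ℝ) (x : X) : γ θ - f x ≠ 0 := sub_ne_zero.2 fun h =>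
    hsph x (h ▸ mem_sphere.1 (circleMap_mem_sphere c hr.le θ))
  let G : C(ℝ × X, ℂ) := ⟨fun q => deriv γ q.1 • ((γ q.1 - f q.2)⁻¹ • p (γ q.1)), by
    have := hp.continuous
    simp only [γ, deriv_circleMap]
    fun_prop (disch := exact fun q => hγ q.1 q.2)⟩
  have hGA (θ : ℝ) : G.curry θ ∈ A := by
    obtain ⟨g, hgA, hg⟩ := hres (γ θ) (circleMap_mem_sphere c hr.le θ)
    convert A.smul_mem hgA (deriv γ θ * p (γ θ)) using 1
    ext x
    simp only [G, ContinuousMap.curry_apply, ContinuousMap.coe_mk, ContinuousMap.coe_smul,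
      Pi.smul_apply, hg, smul_eq_mul]
    ring
  have hint : ∫ θ in (0)..(2 * Real.pi), G.curry θ ∈ A.toSubmodule.restrictScalars ℝ :=
    intervalIntegral_mem_of_isClosed hAcl G.curry.continuous hGA _ _
  refine ⟨(2 * Real.pi * Complex.I : ℂ)⁻¹ • ∫ θ in (0)..(2 * Real.pi), G.curry θ,
    A.smul_mem hint _, fun x => ?_⟩
  rw [← circleIntegral_sub_inv_smul_eq_ite hp hr (hsph x), ContinuousMap.smul_apply,
    ← ContinuousMap.evalCLM_apply ℂ x,
    ← ContinuousLinearMap.intervalIntegral_comp_comm _ (G.curry.continuous.intervalIntegrable _ _)]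
  rfl

end ContinuousFunctions

open Filter in
/-- Telescoping: lift the increments of an approximating sequence with geometrically small
norms, and sum the lifts. -/
theorem AddMonoidHom.isClosed_range_of_exists_preimage_norm_le {E F : Type*}
    [NormedAddCommGroup E] [CompleteSpace E] [NormedAddCommGroup F] (T : E →+ F)
    (hT : Continuous T) (C : ℝ) (hC : ∀ x, ∃ x', T x' = T x ∧ ‖x'‖ ≤ C * ‖T x‖) :
    IsClosed (Set.range T) := by
  refine isClosed_of_closure_subset fun y hy => ?_
  have happrox (n : ℕ) : ∃ v, dist y (T v) < (1 / 2) ^ n := by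
    obtain ⟨_, ⟨v, rfl⟩, h⟩ := Metric.mem_closure_iff.1 hy ((1 / 2 : ℝ) ^ n) (by positivity)
    exact ⟨v, h⟩
  choose v hv using happrox
  have hlim : Tendsto (fun n => T (v n)) atTop (𝓝 y) :=
    tendsto_iff_dist_tendsto_zero.2 <| squeeze_zero (fun _ => dist_nonneg)
      (fun n => (dist_comm y _ ▸ hv n).le) (tendsto_pow_atTop_nhds_zero_of_lt_one (by norm_num)
        (by norm_num))
  have hstep (n : ℕ) : ‖T (v (n + 1) - v n)‖ ≤ 2 * (1 / 2) ^ n := by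
    rw [map_sub, ← dist_eq_norm]
    calc dist (T (v (n + 1))) (T (v n)) ≤ dist y (T (v (n + 1))) + dist y (T (v n)) :=
          dist_triangle_left _ _ _
      _ ≤ (1 / 2) ^ (n + 1) + (1 / 2) ^ n := add_le_add (hv _).le (hv _).le
      _ ≤ 2 * (1 / 2) ^ n := by
        rw [pow_succ]
        linarith [pow_nonneg (by norm_num : (0 : ℝ) ≤ 1 / 2) n]
  choose z hzT hzC using fun n => hC (v (n + 1) - v n)
  have hz : Summable z := .of_norm_bounded (summable_geometric_two.mul_left (|C| * 2)) fun n =>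
    (hzC n).trans <| by
      rw [mul_assoc]
      exact mul_le_mul (le_abs_self C) (hstep n) (norm_nonneg _) (abs_nonneg C)
  have hTz : T (∑' n, z n) = y - T (v 0) := by
    refine tendsto_nhds_unique ((hz.hasSum.map T hT).tendsto_sum_nat) ?_
    simp only [Function.comp_def, hzT, map_sub, Finset.sum_range_sub (fun n => T (v n))]
    exact hlim.sub_const _
  exact ⟨v 0 + ∑' n, z n, by rw [map_add, hTz, add_sub_cancel]⟩

section PerfectKernel

variable {X : Type*} [TopologicalSpace X] [CompactSpace X] {A : Subalgebra ℂ C(X, ℂ)}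

theorem Subalgebra.exists_radius_mem_apply_eq_ite (K : Set X) [CompactSpace K]
    (hKmax : ∀ P : Set X, Perfect P → P ⊆ K) (hAcl : IsClosed (A : Set C(X, ℂ)))
    {f : C(X, ℂ)} (hf : f ∈ A) {c : ℂ} {a b : ℝ} (ha : 0 ≤ a) (hab : a < b)
    (hgap : ∀ x ∈ K, dist (f x) c ∉ Ioo a b)
    (houter : (f '' K ∩ {w | b ≤ dist w c}).Countable) :
    ∃ r ∈ Ioo a b, ∀ p : ℂ → ℂ, Differentiable ℂ p →
      ∃ h ∈ A, ∀ x, h x = if dist (f x) c < r then p (f x) else 0 := by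
  have hcnt := countable_range_diff_image_of_forall_perfect_subset K hKmax f
  obtain ⟨r, hr, hrab⟩ := ((hcnt.image fun w => dist w c).dense_compl ℝ).exists_between hab
  have hr0 : 0 < r := ha.trans_lt hrab.1
  have hsph (x : X) : dist (f x) c ≠ r := fun hx => by
    by_cases hfx : f x ∈ f '' K
    · obtain ⟨y, hy, hyx⟩ := hfx
      exact hgap y hy (hyx ▸ hx ▸ hrab)
    · exact hr ⟨f x, ⟨mem_range_self x, hfx⟩, hx⟩
  have hfar : {w ∈ range f | r ≤ dist w c}.Countable := (hcnt.union houter).mono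
    fun w ⟨hw, hwr⟩ => by
      by_cases hwK : w ∈ f '' K
      · obtain ⟨y, hy, rfl⟩ := hwK
        exact Or.inr ⟨⟨y, hy, rfl⟩, not_lt.1 fun hlt => hgap y hy ⟨hrab.1.trans_le hwr, hlt⟩⟩
      · exact Or.inl ⟨hw, hwK⟩
  exact ⟨r, hrab, fun p hp => A.exists_mem_apply_eq_ite hAcl hr0 hsph
    (fun w hw => A.exists_mem_apply_eq_inv_sub hAcl hf hr0 hsph hfar hw) hp⟩

theorem Subalgebra.exists_mem_restrict_eq_norm_le (K : Set X) [CompactSpace K]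
    (hKmax : ∀ P : Set X, Perfect P → P ⊆ K) (hAcl : IsClosed (A : Set C(X, ℂ)))
    {f : C(X, ℂ)} (hf : f ∈ A) {ε : ℝ} (hε : ‖f.restrict K‖ < ε) :
    ∃ h ∈ A, h.restrict K = f.restrict K ∧ ‖h‖ ≤ ε := by
  have hfK (x : X) (hx : x ∈ K) : dist (f x) 0 ≤ ‖f.restrict K‖ := by
    simpa using (f.restrict K).norm_coe_le_norm ⟨x, hx⟩
  obtain ⟨r, hr, hpiece⟩ := A.exists_radius_mem_apply_eq_ite K hKmax hAcl hf (c := 0)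
    (norm_nonneg _) hε (fun x hx hxr => (hfK x hx).not_gt hxr.1)
    (countable_empty.mono fun _ ⟨⟨x, hx, hxw⟩, hw⟩ => by
      subst hxw
      exact absurd (hε.trans_le hw) (hfK x hx).not_gt)
  obtain ⟨h, hA, hh⟩ := hpiece id differentiable_id
  refine ⟨h, hA, ?_, (ContinuousMap.norm_le _ ((norm_nonneg _).trans hε.le)).2 fun x => ?_⟩
  · ext ⟨x, hx⟩
    exact (hh x).trans (if_pos ((hfK x hx).trans_lt hr.1))
  · rw [hh x]
    split_ifs with hlt
    · simpa using hlt.le.trans hr.2.le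
    · simpa using (norm_nonneg _).trans hε.le

theorem Subalgebra.isClosed_restrictSet (K : Set X) [CompactSpace K]
    (hKmax : ∀ P : Set X, Perfect P → P ⊆ K) (hAcl : IsClosed (A : Set C(X, ℂ))) :
    IsClosed (restrictSet A K) := by
  have := hAcl.completeSpace_coe
  let T : A →+ C(K, ℂ) :=
    { toFun := fun f => (f : C(X, ℂ)).restrict K, map_zero' := rfl, map_add' := fun _ _ => rfl }
  have hT : restrictSet A K = Set.range T := Set.ext fun _ =>
    ⟨fun ⟨f, hf, hfg⟩ => ⟨⟨f, hf⟩, hfg⟩, fun ⟨f, hfg⟩ => ⟨f, f.2, hfg⟩⟩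
  rw [hT]
  refine T.isClosed_range_of_exists_preimage_norm_le
    ((ContinuousMap.continuous_restrict K).comp continuous_subtype_val) 2 fun f => ?_
  obtain h0 | hpos := (norm_nonneg (T f)).eq_or_lt
  · exact ⟨0, (norm_eq_zero.1 h0.symm).symm ▸ map_zero T, by simp⟩
  · obtain ⟨h, hA, hK, hnorm⟩ :=
      A.exists_mem_restrict_eq_norm_le K hKmax hAcl f.2 (by linarith : ‖T f‖ < 2 * ‖T f‖)
    exact ⟨⟨h, hA⟩, hK, hnorm⟩

end PerfectKernel

theorem chiMem.isClopen {X : Type*} [TopologicalSpace X] {A : Subalgebra ℂ C(X, ℂ)} {H : Set X}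
    (hH : chiMem A H) : IsClopen H := by
  obtain ⟨g, -, hg⟩ := hH
  have h1 : H = g ⁻¹' {1} := ext fun x => by by_cases hx : x ∈ H <;> simp [hg, hx]
  have h0 : H = g ⁻¹' {0}ᶜ := ext fun x => by by_cases hx : x ∈ H <;> simp [hg, hx]
  exact ⟨h1 ▸ isClosed_singleton.preimage g.continuous,
    h0 ▸ isOpen_compl_singleton.preimage g.continuous⟩

theorem stmt10 {X : Type*} [TopologicalSpace X] [CompactSpace X]
    (K : Set X) (hKperf : Perfect K)
    (hKmax : ∀ P : Set X, Perfect P → P ⊆ K)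
    (A : Subalgebra ℂ C(X, ℂ))
    (hAcl : IsClosed (A : Set C(X, ℂ))) :
    IsClosed (restrictSet A K) ∧
      ∀ J : Set K, IsClopen J →
        (∃ f ∈ A, ∀ x : K, f.restrict K x = if x ∈ J then (1 : ℂ) else 0) →
        ∃ H : Set X, IsClopen H ∧ chiMem A H ∧ J = Subtype.val ⁻¹' H := by
  have : CompactSpace K := isCompact_iff_compactSpace.1 hKperf.closed.isCompact
  refine ⟨A.isClosed_restrictSet K hKmax hAcl, fun J _ ⟨f, hfA, hfJ⟩ => ?_⟩
  have hfK (x : X) (hx : x ∈ K) : f x = if (⟨x, hx⟩ : K) ∈ J then 1 else 0 := hfJ ⟨x, hx⟩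
  have hdist (x : X) (hx : x ∈ K) : dist (f x) 1 = if (⟨x, hx⟩ : K) ∈ J then 0 else 1 := by
    rw [hfK x hx]
    split_ifs <;> simp
  obtain ⟨r, hr, hpiece⟩ := A.exists_radius_mem_apply_eq_ite K hKmax hAcl hfA (c := 1) le_rfl
    one_pos (fun x hx => by rw [hdist x hx]; split_ifs <;> simp)
    ((countable_singleton (0 : ℂ)).mono fun _ ⟨⟨x, hx, hxw⟩, hw⟩ => by
      subst hxw
      change 1 ≤ dist (f x) 1 at hw
      by_cases hJ : (⟨x, hx⟩ : K) ∈ J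
      · rw [hdist x hx, if_pos hJ] at hw
        norm_num at hw
      · simp [hfK x hx, hJ])
  obtain ⟨e, heA, he⟩ := hpiece 1 (differentiable_const 1)
  have hχ : chiMem A {x | dist (f x) 1 < r} := ⟨e, heA, he⟩
  refine ⟨_, hχ.isClopen, hχ, ext fun ⟨x, hx⟩ => ?_⟩
  change _ ↔ dist (f x) 1 < r
  rw [hdist x hx]
  split_ifs with hJ <;> simp [hJ, hr.1, hr.2.le]
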